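/- Let D = (V,E) be a digraph on n vertices that contains a spanning in-arborescence and a spanning out-arborescence with the same root r which are edge-disjoint. Then D admits an edge temporalisation making the resulting temporal graph temporally connected, i.e., with temporal reachability equal to n² (every node temporally reachable from every node). -/

import Mathlib

/-- A temporal path in a digraph with edge relation `E` and temporalisation `τ`:
a nonempty list of edges of `E`, consecutive (head = next tail), from `u` to `v`,
with strictly increasing times. -/
def IsTemporalPath {V : Type*} (E : V → V → Prop) (τ : V × V → ℕ)
    (u v : V) (p : List (V × V)) : Prop :=
  (∀ e ∈ p, E e.1 e.2) ∧
  (∃ e ∈ p.head?, e.1 = u) ∧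
  (∃ e ∈ p.getLast?, e.2 = v) ∧
  p.Chain' (fun e f => e.2 = f.1) ∧
  p.Chain' (fun e f => τ e < τ f)

/-- `v` is temporally reachable from `u`. -/
def TReach {V : Type*} (E : V → V → Prop) (τ : V × V → ℕ) (u v : V) : Prop :=
  u = v ∨ ∃ p, IsTemporalPath E τ u v p

/-- `T` is (the edge relation of) an out-arborescence of the digraph `E`,
rooted at `r`, spanning the vertex set `B`. -/
structure IsOutArb {V : Type*} (E : V → V → Prop) (T : V → V → Prop)
    (r : V) (B : Set V) : Prop where
  sub : ∀ ⦃a b⦄, T a b → E a b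
  mem : ∀ ⦃a b⦄, T a b → a ∈ B ∧ b ∈ B
  root : r ∈ B
  reach : ∀ v ∈ B, Relation.ReflTransGen T r v
  parent : ∀ v ∈ B, v ≠ r → ∃! u, T u v
  rootNoParent : ∀ u, ¬ T u r

/-- `T` is (the edge relation of) an in-arborescence of the digraph `E`,
rooted at `r`, spanning the vertex set `B`. -/
structure IsInArb {V : Type*} (E : V → V → Prop) (T : V → V → Prop)
    (r : V) (B : Set V) : Prop where
  sub : ∀ ⦃a b⦄, T a b → E a b
  mem : ∀ ⦃a b⦄, T a b → a ∈ B ∧ b ∈ B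
  root : r ∈ B
  reach : ∀ v ∈ B, Relation.ReflTransGen T v r
  child : ∀ v ∈ B, v ≠ r → ∃! u, T v u
  rootNoChild : ∀ u, ¬ T r u

/-!
Give the edges of the in-arborescence early times that increase towards the root, and the
edges of the out-arborescence later times that increase away from the root; since the two
trees share no edge, this is a consistent temporalisation. Then any `u` reaches any `v` by
walking the in-tree from `u` up to `r` and then the out-tree from `r` down to `v`. The times
come from ranks: the number of steps to the root in the in-tree, and from the root in the
out-tree.
-/

open Relation

section Rank

variable {V : Type*}

lemma exists_rank_lt_of_reflTransGen {R : V → V → Prop} {r : V}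
    (hreach : ∀ v, ReflTransGen R v r) (hfun : ∀ ⦃v u u'⦄, R v u → R v u' → u = u')
    (hroot : ∀ u, ¬ R r u) : ∃ d : V → ℕ, ∀ ⦃v u⦄, R v u → d u < d v := by
  classical
  obtain ⟨s, hs⟩ : ∃ s : V → V, ∀ ⦃v u⦄, R v u → s v = u :=
    ⟨fun v => if h : ∃ u, R v u then h.choose else v,
      fun v u h => by dsimp only; rw [dif_pos ⟨u, h⟩]; exact hfun (Exists.choose_spec ⟨u, h⟩) h⟩
  have hiter : ∀ v, ∃ n, s^[n] v = r := fun v => by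
    induction hreach v using ReflTransGen.head_induction_on with
    | refl => exact ⟨0, rfl⟩
    | head hab _ ih =>
      obtain ⟨n, hn⟩ := ih
      exact ⟨n + 1, by rw [Function.iterate_succ_apply, hs hab, hn]⟩
  refine ⟨fun v => Nat.find (hiter v), fun v u h => ?_⟩
  change Nat.find (hiter u) < Nat.find (hiter v)
  have hvr : ¬ s^[0] v = r := fun hv => hroot u (hv ▸ h)
  have hsucc : ∃ n, s^[n + 1] v = r := by
    simpa only [Function.iterate_succ_apply, hs h] using hiter u
  rw [Nat.find_comp_succ (hiter v) hsucc hvr, Nat.lt_succ_iff]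
  exact Nat.find_mono fun n hn => by rwa [Function.iterate_succ_apply, hs h] at hn

lemma IsInArb.exists_rank {E T : V → V → Prop} {r : V} (h : IsInArb E T r Set.univ) :
    ∃ d : V → ℕ, ∀ ⦃a b⦄, T a b → d b < d a :=
  exists_rank_lt_of_reflTransGen (fun v => h.reach v trivial)
    (fun v _ _ hu hu' => (h.child v trivial fun hv => h.rootNoChild _ (hv ▸ hu)).unique hu hu')
    h.rootNoChild

lemma IsOutArb.exists_rank {E T : V → V → Prop} {r : V} (h : IsOutArb E T r Set.univ) :
    ∃ d : V → ℕ, ∀ ⦃a b⦄, T a b → d a < d b :=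
  (exists_rank_lt_of_reflTransGen (R := Function.swap T)
    (fun v => reflTransGen_swap.2 (h.reach v trivial))
    (fun v _ _ hu hu' => (h.parent v trivial fun hv => h.rootNoParent _ (hv ▸ hu)).unique hu hu')
    h.rootNoParent).imp fun _ hd _ _ h => hd h

end Rank

section TemporalPath

variable {V : Type*} {E : V → V → Prop} {τ : V × V → ℕ}

lemma IsTemporalPath.singleton {u v : V} (h : E u v) : IsTemporalPath E τ u v [(u, v)] :=
  ⟨by simpa using h, ⟨_, rfl, rfl⟩, ⟨_, rfl, rfl⟩, List.isChain_singleton _,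
    List.isChain_singleton _⟩

lemma IsTemporalPath.append {u w v : V} {p q : List (V × V)} (hp : IsTemporalPath E τ u w p)
    (hq : IsTemporalPath E τ w v q) (hpq : ∀ e ∈ p.getLast?, ∀ f ∈ q.head?, τ e < τ f) :
    IsTemporalPath E τ u v (p ++ q) := by
  obtain ⟨hpE, ⟨e₀, he₀, rfl⟩, ⟨e₁, he₁, rfl⟩, hpc, hpt⟩ := hp
  obtain ⟨hqE, ⟨f₀, hf₀, hf₀w⟩, ⟨f₁, hf₁, rfl⟩, hqc, hqt⟩ := hq
  refine ⟨fun e he => (List.mem_append.1 he).elim (hpE e) (hqE e), ⟨e₀, ?_, rfl⟩,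
    ⟨f₁, ?_, rfl⟩, List.IsChain.append hpc hqc ?_, List.IsChain.append hpt hqt hpq⟩
  · simp [List.head?_append, Option.mem_def.1 he₀]
  · simp [List.getLast?_append, Option.mem_def.1 hf₁]
  · intro e he f hf
    rw [Option.mem_unique he he₁, Option.mem_unique hf hf₀, hf₀w]

def TReachVia (E : V → V → Prop) (τ : V × V → ℕ) (R : V → V → Prop) (u v : V) : Prop :=
  u = v ∨ ∃ p, IsTemporalPath E τ u v p ∧ ∀ e ∈ p, R e.1 e.2

variable {R S : V → V → Prop}

lemma TReachVia.treach {u v : V} (h : TReachVia E τ R u v) : TReach E τ u v :=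
  h.imp_right fun ⟨p, hp, _⟩ => ⟨p, hp⟩

lemma TReachVia.of_reflTransGen (hRE : ∀ ⦃a b⦄, R a b → E a b)
    (hτ : ∀ ⦃a b c⦄, R a b → R b c → τ (a, b) < τ (b, c)) {u v : V}
    (h : ReflTransGen R u v) : TReachVia E τ R u v := by
  induction h using ReflTransGen.head_induction_on with
  | refl => exact Or.inl rfl
  | @head a b hab _ ih =>
    right
    rcases ih with rfl | ⟨p, hp, hpR⟩
    · exact ⟨[(a, b)], .singleton (hRE hab), by simpa using hab⟩
    · refine ⟨[(a, b)] ++ p, (IsTemporalPath.singleton (hRE hab)).append hp ?_, ?_⟩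
      · rintro _ ⟨⟩ f hf
        obtain ⟨e, he, rfl⟩ := hp.2.1
        rw [Option.mem_unique hf he]
        exact hτ hab (hpR e (List.mem_of_mem_head? he))
      · simpa [hab] using hpR

lemma TReachVia.trans_treach {u w v : V} (h₁ : TReachVia E τ R u w) (h₂ : TReachVia E τ S w v)
    (hRS : ∀ ⦃a b c d⦄, R a b → S c d → τ (a, b) < τ (c, d)) : TReach E τ u v := by
  rcases h₁ with rfl | ⟨p, hp, hpR⟩
  · exact h₂.treach
  rcases h₂ with rfl | ⟨q, hq, hqS⟩
  · exact Or.inr ⟨p, hp⟩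
  exact Or.inr ⟨p ++ q, hp.append hq fun e he f hf =>
    hRS (hpR e (List.mem_of_mem_getLast? he)) (hqS f (List.mem_of_mem_head? hf))⟩

end TemporalPath

theorem stmt8 {V : Type*} [Fintype V] (E Tin Tout : V → V → Prop) (r : V)
    (hin : IsInArb E Tin r Set.univ) (hout : IsOutArb E Tout r Set.univ)
    (hdisj : ∀ a b, Tin a b → Tout a b → False) :
    ∃ τ : V × V → ℕ, (∀ u v : V, TReach E τ u v) ∧
      {p : V × V | TReach E τ p.1 p.2}.ncard = Fintype.card V ^ 2 := by
  classical
  obtain ⟨din, hdin⟩ := hin.exists_rank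
  obtain ⟨dout, hdout⟩ := hout.exists_rank
  set C := Finset.univ.sup din
  have hC : ∀ v, din v ≤ C := fun v => Finset.le_sup (Finset.mem_univ v)
  let τ : V × V → ℕ := fun e => if Tin e.1 e.2 then C - din e.1 else C + 1 + dout e.2
  have hτin : ∀ ⦃a b⦄, Tin a b → τ (a, b) = C - din a := fun _ _ h => if_pos h
  have hτout : ∀ ⦃a b⦄, Tout a b → τ (a, b) = C + 1 + dout b := fun a b h =>
    if_neg fun h' => hdisj a b h' h
  have hreach : ∀ u v, TReach E τ u v := fun u v =>
    (TReachVia.of_reflTransGen hin.sub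
        (fun a b c hab hbc => by rw [hτin hab, hτin hbc]; have := hdin hab; have := hC a; omega)
        (hin.reach u trivial)).trans_treach
      (TReachVia.of_reflTransGen hout.sub
        (fun a b c hab hbc => by rw [hτout hab, hτout hbc]; have := hdout hbc; omega)
        (hout.reach v trivial))
      (fun a b c d hab hcd => by rw [hτin hab, hτout hcd]; omega)
  refine ⟨τ, hreach, ?_⟩
  rw [Set.eq_univ_of_forall (s := {p : V × V | TReach E τ p.1 p.2}) fun p => hreach p.1 p.2,
    Set.ncard_univ, Nat.card_eq_fintype_card, Fintype.card_prod, sq]
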